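/- arXiv:1404.3088 — 3 statements merged into one kernel-verified Lean document; each statement's English description precedes it below -/
import Mathlib

section
/- Let {α_j} be an interpolating (Carleson) sequence in the unit disk with δ = inf_j δ_j > 0, where δ_j = ∏_{i≠j} |(α_i - α_j)/(1 - \bar{α}_j α_i)|. Then there are constants c, C > 0 depending only on δ such that for every n, c(1-δ_n²) ≤ ‖(G-I)e_n‖² ≤ C(1-δ_n²). -/
noncomputable abbrev ellTwo : Type := lp (fun _ : ℕ => ℂ) 2

/-!
Off the diagonal, the `n`-th column of `G - I` has entries `⟨g_n, g_j⟩`, and the identity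
`|1 - b̄a|² - |a - b|² = (1 - |a|²)(1 - |b|²)` gives `|⟨g_n, g_j⟩|² = 1 - ρ(α_j, α_n)²`;
the diagonal entry vanishes. Hence `‖(G - I)e_n‖² = ∑ⱼ (1 - qⱼ)` with `qⱼ ∈ (0, 1]` and
`∏ⱼ qⱼ = δ_n²`. For such factors with product `P > 0`,
`1 - P ≤ ∑ (1 - qⱼ) ≤ ∑ -log qⱼ = -log P ≤ P⁻¹ - 1`,
and `P = δ_n² ≥ δ²` gives the constants `c = 1`, `C = δ⁻²`.
-/

open ComplexConjugate

section InfiniteProducts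

variable {ι : Type*} {q : ι → ℝ} {P S : ℝ}

theorem Finset.one_sub_prod_le_sum_one_sub (s : Finset ι) (h0 : ∀ j, 0 ≤ q j)
    (h1 : ∀ j, q j ≤ 1) : 1 - ∏ j ∈ s, q j ≤ ∑ j ∈ s, (1 - q j) := by
  classical
  induction s using Finset.induction with
  | empty => simp
  | insert a s has ih =>
    rw [Finset.prod_insert has, Finset.sum_insert has]
    have hP0 : 0 ≤ ∏ j ∈ s, q j := Finset.prod_nonneg fun j _ => h0 j
    have hP1 : ∏ j ∈ s, q j ≤ 1 := Finset.prod_le_one (fun j _ => h0 j) (fun j _ => h1 j)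
    nlinarith [h0 a, h1 a]

theorem multipliable_of_nonneg_of_le_one (h0 : ∀ j, 0 ≤ q j) (h1 : ∀ j, q j ≤ 1) :
    Multipliable q :=
  ⟨_, tendsto_atTop_ciInf (Finset.prod_anti_set_of_le_one h0 h1)
    ⟨0, by rintro _ ⟨s, rfl⟩; exact Finset.prod_nonneg fun j _ => h0 j⟩⟩

theorem HasProd.le_prod_of_le_one (h0 : ∀ j, 0 ≤ q j) (h1 : ∀ j, q j ≤ 1) (hP : HasProd q P)
    (s : Finset ι) : P ≤ ∏ j ∈ s, q j :=
  (Finset.prod_anti_set_of_le_one h0 h1).le_of_tendsto hP s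

theorem HasProd.one_sub_le_of_hasSum (h0 : ∀ j, 0 ≤ q j) (h1 : ∀ j, q j ≤ 1)
    (hP : HasProd q P) (hS : HasSum (fun j => 1 - q j) S) : 1 - P ≤ S :=
  le_of_tendsto_of_tendsto' (tendsto_const_nhds.sub hP) hS fun s =>
    s.one_sub_prod_le_sum_one_sub h0 h1

theorem HasProd.hasSum_log (hq : ∀ j, 0 < q j) (hP : HasProd q P) (hP0 : 0 < P) :
    HasSum (fun j => Real.log (q j)) (Real.log P) :=
  ((Real.continuousAt_log hP0.ne').tendsto.comp hP).congr fun _ =>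
    Real.log_prod fun j _ => (hq j).ne'

theorem HasProd.le_inv_sub_one_of_hasSum (hq : ∀ j, 0 < q j) (hP : HasProd q P) (hP0 : 0 < P)
    (hS : HasSum (fun j => 1 - q j) S) : S ≤ P⁻¹ - 1 := by
  have hlog : S ≤ -Real.log P :=
    hasSum_le (fun j => by linarith [Real.log_le_sub_one_of_pos (hq j)]) hS
      (hP.hasSum_log hq hP0).neg
  have hinv : -Real.log P ≤ P⁻¹ - 1 := by
    simpa [Real.log_inv] using Real.log_le_sub_one_of_pos (inv_pos.mpr hP0)
  linarith

end InfiniteProducts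

section Disk

variable {a b : ℂ}

noncomputable def pseudohyperbolic (a b : ℂ) : ℝ := ‖(a - b) / (1 - conj b * a)‖

/-- The Gram entry `⟨g_b, g_a⟩` of the normalized Szegő kernels at `a` and `b`. -/
noncomputable def szegoGramEntry (a b : ℂ) : ℂ :=
  (Real.sqrt ((1 - ‖a‖ ^ 2) * (1 - ‖b‖ ^ 2)) : ℂ) / (1 - conj a * b)

theorem norm_one_sub_conj_mul_sq_sub_norm_sub_sq (a b : ℂ) :
    ‖1 - conj b * a‖ ^ 2 - ‖a - b‖ ^ 2 = (1 - ‖a‖ ^ 2) * (1 - ‖b‖ ^ 2) := by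
  simp only [← Complex.normSq_eq_norm_sq, Complex.normSq_apply, Complex.sub_re, Complex.sub_im,
    Complex.mul_re, Complex.mul_im, Complex.one_re, Complex.one_im, Complex.conj_re,
    Complex.conj_im]
  ring

theorem norm_one_sub_conj_mul_comm (a b : ℂ) : ‖1 - conj a * b‖ = ‖1 - conj b * a‖ := by
  rw [← Complex.norm_conj]
  congr 1
  simp only [map_sub, map_one, map_mul, Complex.conj_conj]
  ring

theorem one_sub_sq_norm_pos (ha : ‖a‖ < 1) : 0 < 1 - ‖a‖ ^ 2 := by
  nlinarith [norm_nonneg a]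

theorem norm_one_sub_conj_mul_pos (ha : ‖a‖ < 1) (hb : ‖b‖ < 1) :
    0 < ‖1 - conj b * a‖ := by
  nlinarith [norm_one_sub_conj_mul_sq_sub_norm_sub_sq a b, one_sub_sq_norm_pos ha,
    one_sub_sq_norm_pos hb, norm_nonneg (a - b), norm_nonneg (1 - conj b * a)]

theorem pseudohyperbolic_le_one (ha : ‖a‖ < 1) (hb : ‖b‖ < 1) :
    pseudohyperbolic a b ≤ 1 := by
  rw [pseudohyperbolic, norm_div, div_le_one (norm_one_sub_conj_mul_pos ha hb)]
  nlinarith [norm_one_sub_conj_mul_sq_sub_norm_sub_sq a b, one_sub_sq_norm_pos ha,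
    one_sub_sq_norm_pos hb, norm_nonneg (a - b), norm_one_sub_conj_mul_pos ha hb]

theorem szegoGramEntry_self (ha : ‖a‖ < 1) : szegoGramEntry a a = 1 := by
  have h : (1 : ℂ) - conj a * a = ((1 - ‖a‖ ^ 2 : ℝ) : ℂ) := by
    rw [mul_comm, Complex.mul_conj, Complex.normSq_eq_norm_sq]
    push_cast
    ring
  rw [szegoGramEntry, ← sq, Real.sqrt_sq (one_sub_sq_norm_pos ha).le, h,
    div_self (by exact_mod_cast (one_sub_sq_norm_pos ha).ne')]

theorem norm_szegoGramEntry_sq (ha : ‖a‖ < 1) (hb : ‖b‖ < 1) :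
    ‖szegoGramEntry a b‖ ^ 2 = 1 - pseudohyperbolic a b ^ 2 := by
  have hw := norm_one_sub_conj_mul_pos ha hb
  rw [szegoGramEntry, norm_div, div_pow, Complex.norm_real, Real.norm_eq_abs, sq_abs,
    Real.sq_sqrt (mul_nonneg (one_sub_sq_norm_pos ha).le (one_sub_sq_norm_pos hb).le),
    norm_one_sub_conj_mul_comm, pseudohyperbolic, norm_div, div_pow,
    ← norm_one_sub_conj_mul_sq_sub_norm_sub_sq]
  field_simp

end Disk

section EllTwo

theorem lp.hasSum_norm_sq {ι : Type*} {E : ι → Type*} [∀ i, NormedAddCommGroup (E i)]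
    (f : lp E 2) : HasSum (fun i => ‖f i‖ ^ 2) (‖f‖ ^ 2) := by
  simpa using lp.hasSum_norm (p := 2) (by norm_num) f

theorem ellTwo.inner_single_one_left (j : ℕ) (x : ellTwo) :
    inner ℂ (lp.single 2 j (1 : ℂ)) x = x j := by
  simp [lp.inner_single_left]

theorem ellTwo.sub_one_apply_single (T : ellTwo →L[ℂ] ellTwo) (n j : ℕ) :
    (T - 1) (lp.single 2 n (1 : ℂ)) j =
      inner ℂ (lp.single 2 j (1 : ℂ)) (T (lp.single 2 n 1)) - if j = n then 1 else 0 := by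
  simp [ellTwo.inner_single_one_left, Pi.single_apply]

end EllTwo

section Column

variable {α : ℕ → ℂ}

/-- `δ_n = ∏' j, offDiagPseudohyperbolic α n j`. -/
noncomputable def offDiagPseudohyperbolic (α : ℕ → ℂ) (n j : ℕ) : ℝ :=
  if j = n then 1 else pseudohyperbolic (α j) (α n)

theorem offDiagPseudohyperbolic_nonneg (n j : ℕ) : 0 ≤ offDiagPseudohyperbolic α n j := by
  unfold offDiagPseudohyperbolic pseudohyperbolic
  split_ifs <;> positivity

theorem offDiagPseudohyperbolic_le_one (hα : ∀ j, ‖α j‖ < 1) (n j : ℕ) :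
    offDiagPseudohyperbolic α n j ≤ 1 := by
  unfold offDiagPseudohyperbolic
  split_ifs
  exacts [le_rfl, pseudohyperbolic_le_one (hα j) (hα n)]

theorem hasProd_offDiagPseudohyperbolic_sq (hα : ∀ j, ‖α j‖ < 1) (n : ℕ) :
    HasProd (fun j => offDiagPseudohyperbolic α n j ^ 2)
      ((∏' j, offDiagPseudohyperbolic α n j) ^ 2) :=
  (multipliable_of_nonneg_of_le_one (offDiagPseudohyperbolic_nonneg n)
    (offDiagPseudohyperbolic_le_one hα n)).hasProd.pow 2

theorem hasSum_norm_gram_sub_one_single_sq (hα : ∀ j, ‖α j‖ < 1)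
    {G : ellTwo →L[ℂ] ellTwo}
    (hG : ∀ i j : ℕ, inner ℂ (lp.single 2 i (1 : ℂ)) (G (lp.single 2 j 1)) =
      szegoGramEntry (α i) (α j)) (n : ℕ) :
    HasSum (fun j => 1 - offDiagPseudohyperbolic α n j ^ 2)
      (‖(G - 1) (lp.single 2 n (1 : ℂ))‖ ^ 2) := by
  refine (lp.hasSum_norm_sq _).congr_fun fun j => ?_
  rw [ellTwo.sub_one_apply_single, hG, offDiagPseudohyperbolic]
  split_ifs with hj
  · subst hj
    simp [szegoGramEntry_self (hα j)]
  · simp [norm_szegoGramEntry_sq (hα j) (hα n)]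

end Column

theorem gram_column_norm_comparable (α : ℕ → ℂ) (hα : ∀ j, ‖α j‖ < 1)
    (d : ℕ → ℝ)
    (hd : ∀ n, d n = ∏' i : ℕ, if i = n then 1 else
      ‖(α i - α n) / (1 - (starRingEnd ℂ) (α n) * α i)‖)
    (δ : ℝ) (hδ : 0 < δ) (hsep : ∀ n, δ ≤ d n)
    (G : ellTwo →L[ℂ] ellTwo)
    (hG : ∀ i j : ℕ, (inner ℂ (lp.single 2 i (1:ℂ)) (G (lp.single 2 j (1:ℂ))) : ℂ) =
      ((Real.sqrt ((1 - ‖α i‖ ^ 2) * (1 - ‖α j‖ ^ 2)) : ℝ) : ℂ) /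
        (1 - (starRingEnd ℂ) (α i) * α j)) :
    ∃ c > 0, ∃ C > 0, ∀ n : ℕ,
      c * (1 - d n ^ 2) ≤ ‖(G - 1) (lp.single 2 n (1:ℂ))‖ ^ 2 ∧
      ‖(G - 1) (lp.single 2 n (1:ℂ))‖ ^ 2 ≤ C * (1 - d n ^ 2) := by
  refine ⟨1, one_pos, (δ ^ 2)⁻¹, by positivity, fun n => ?_⟩
  set q := fun j => offDiagPseudohyperbolic α n j ^ 2
  have hq1 : ∀ j, q j ≤ 1 := fun j =>
    pow_le_one₀ (offDiagPseudohyperbolic_nonneg n j) (offDiagPseudohyperbolic_le_one hα n j)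
  have hprod : HasProd q (d n ^ 2) := by
    rw [hd n]
    exact hasProd_offDiagPseudohyperbolic_sq hα n
  have hd0 : 0 < d n := hδ.trans_le (hsep n)
  have hd1 : d n ^ 2 ≤ 1 := by
    simpa using hprod.le_prod_of_le_one (fun j => sq_nonneg _) hq1 ∅
  have hq0 : ∀ j, 0 < q j := fun j =>
    (pow_pos hd0 2).trans_le (by simpa using hprod.le_prod_of_le_one (fun j => sq_nonneg _) hq1 {j})
  have hsum := hasSum_norm_gram_sub_one_single_sq hα hG n
  constructor
  · simpa using hprod.one_sub_le_of_hasSum (fun j => (hq0 j).le) hq1 hsum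
  · calc ‖(G - 1) (lp.single 2 n (1:ℂ))‖ ^ 2 ≤ (d n ^ 2)⁻¹ - 1 :=
          hprod.le_inv_sub_one_of_hasSum hq0 (by positivity) hsum
      _ = (1 - d n ^ 2) / d n ^ 2 := by field_simp
      _ ≤ (1 - d n ^ 2) / δ ^ 2 := by gcongr; exact hsep n
      _ = (δ ^ 2)⁻¹ * (1 - d n ^ 2) := by ring
end

section
/- Let T be a bounded operator on a separable Hilbert space and 0 < p ≤ 2. If there exists an orthonormal basis {e_n} with Σ_n ‖T e_n‖^p < ∞, then T ∈ S_p and ‖T‖_{S_p}^p ≤ Σ_n ‖T e_n‖^p. -/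
/-- The `n`-th approximation number of `T`: the distance from `T` to operators of rank
at most `n`.  For operators on Hilbert space these coincide with the singular values. -/
noncomputable def approxNumber {H : Type*} [NormedAddCommGroup H]
    [InnerProductSpace ℂ H] (T : H →L[ℂ] H) (n : ℕ) : ℝ :=
  sInf {c : ℝ | ∃ F : H →L[ℂ] H,
    LinearMap.rank (F : H →ₗ[ℂ] H) ≤ (n : Cardinal) ∧ c = ‖T - F‖}

/-- `T` is in the Schatten `p`-class: compact with `p`-summable singular values. -/
def MemSchatten {H : Type*} [NormedAddCommGroup H] [InnerProductSpace ℂ H]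
    (p : ℝ) (T : H →L[ℂ] H) : Prop :=
  IsCompactOperator T ∧ Summable (fun n : ℕ => approxNumber T n ^ p)

/-!
Compress `T` to `T ∘ Pₛ`, where `Pₛ` is the orthogonal projection onto the span of the `e k`,
`k ∈ s`, for finite `s`. A finite-rank operator `S` has a Schmidt decomposition
`S = ∑ ⟪f i, ·⟫ • u i` with `f` orthonormal and `u` orthogonal (diagonalize `S† S`). Its
approximation numbers are then bounded by the decreasingly ordered `‖u i‖`, and
`‖S e_k‖² = ∑ᵢ |⟪f i, e_k⟫|² ‖u i‖²` with weights of total mass at most one in `i` and exactly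
one in `k`; concavity of `t ↦ t ^ (p / 2)` for `p ≤ 2` gives `∑ ‖u i‖ ^ p ≤ ∑ ‖S e_k‖ ^ p`,
and `‖(T ∘ Pₛ) e_k‖ ≤ ‖T e_k‖`. As `ℓᵖ ⊆ ℓ²`, the Hilbert–Schmidt tail bound makes `T ∘ Pₛ → T`
in operator norm; approximation numbers are `1`-Lipschitz, so the partial-sum bounds pass to
`T`, which is compact as a norm limit of finite-rank operators.
-/

open Filter Topology InnerProductSpace

section ApproxNumber

variable {H : Type*} [NormedAddCommGroup H] [InnerProductSpace ℂ H]

theorem approxNumber_nonneg (T : H →L[ℂ] H) (n : ℕ) : 0 ≤ approxNumber T n :=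
  Real.sInf_nonneg <| by rintro c ⟨F, -, rfl⟩; exact norm_nonneg _

theorem approxNumber_le_norm_sub (T : H →L[ℂ] H) {n : ℕ} {F : H →L[ℂ] H}
    (hF : LinearMap.rank (F : H →ₗ[ℂ] H) ≤ n) : approxNumber T n ≤ ‖T - F‖ :=
  csInf_le ⟨0, by rintro c ⟨F, -, rfl⟩; exact norm_nonneg _⟩ ⟨F, hF, rfl⟩

theorem approxNumber_eq_zero_of_rank_le {T : H →L[ℂ] H} {n : ℕ}
    (hT : LinearMap.rank (T : H →ₗ[ℂ] H) ≤ n) : approxNumber T n = 0 :=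
  ((approxNumber_le_norm_sub T hT).trans_eq (by simp)).antisymm (approxNumber_nonneg T n)

theorem approxNumber_le_add_dist (T S : H →L[ℂ] H) (n : ℕ) :
    approxNumber T n ≤ approxNumber S n + dist T S := by
  rw [← sub_le_iff_le_add]
  refine le_csInf ⟨_, 0, by simp, rfl⟩ ?_
  rintro c ⟨F, hF, rfl⟩
  calc approxNumber T n - dist T S ≤ ‖T - F‖ - ‖T - S‖ := by
        rw [dist_eq_norm]; gcongr; exact approxNumber_le_norm_sub T hF
    _ ≤ ‖S - F‖ := by
        rw [sub_le_iff_le_add, add_comm]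
        simpa using norm_add_le (T - S) (S - F)

theorem lipschitzWith_approxNumber (n : ℕ) :
    LipschitzWith 1 fun T : H →L[ℂ] H => approxNumber T n :=
  LipschitzWith.of_le_add fun T S => approxNumber_le_add_dist T S n

theorem isClosed_setOf_sum_range_approxNumber_rpow_le {p : ℝ} (hp : 0 ≤ p) (M : ℕ) (C : ℝ) :
    IsClosed {T : H →L[ℂ] H | ∑ m ∈ Finset.range M, approxNumber T m ^ p ≤ C} :=
  isClosed_le (continuous_finsetSum _ fun m _ =>
    (Real.continuous_rpow_const hp).comp (lipschitzWith_approxNumber m).continuous)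
    continuous_const

end ApproxNumber

theorem summable_norm_sq_of_summable_norm_rpow {ι E : Type*} [NormedAddCommGroup E] {f : ι → E}
    {p : ℝ} (hp0 : 0 < p) (hp2 : p ≤ 2) (hf : Summable fun i => ‖f i‖ ^ p) :
    Summable fun i => ‖f i‖ ^ 2 := by
  have hmem : Memℓp f (ENNReal.ofReal p) :=
    (memℓp_gen_iff (by simpa [hp0.le] using hp0)).2 (by simpa [hp0.le] using hf)
  have h2 := (memℓp_gen_iff (p := 2) (by norm_num)).1
    (hmem.of_exponent_ge (by simpa using ENNReal.ofReal_le_ofReal hp2))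
  simpa using h2

theorem sum_mul_rpow_le_rpow_sum_mul {ι : Type*} (s : Finset ι) {w a : ι → ℝ}
    (hw : ∀ i, 0 ≤ w i) (ha : ∀ i, 0 ≤ a i) (hw1 : ∑ i ∈ s, w i ≤ 1) {t : ℝ} (ht0 : 0 < t)
    (ht1 : t ≤ 1) : ∑ i ∈ s, w i * a i ^ t ≤ (∑ i ∈ s, w i * a i) ^ t := by
  have holder := Real.inner_le_weight_mul_Lp_of_nonneg s (p := t⁻¹) (one_le_inv₀ ht0 |>.2 ht1)
    w (fun i => a i ^ t) hw fun i => Real.rpow_nonneg (ha i) t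
  simp only [← Real.rpow_mul (ha _), mul_inv_cancel₀ ht0.ne', Real.rpow_one, inv_inv] at holder
  have hwa : 0 ≤ ∑ i ∈ s, w i * a i := Finset.sum_nonneg fun i _ => mul_nonneg (hw i) (ha i)
  refine holder.trans (mul_le_of_le_one_left (Real.rpow_nonneg hwa t) ?_)
  exact Real.rpow_le_one (Finset.sum_nonneg fun i _ => hw i) hw1 (by simp [ht1])

section HilbertBasis

variable {ι 𝕜 E F : Type*} [RCLike 𝕜] [NormedAddCommGroup E] [InnerProductSpace 𝕜 E]
  [NormedAddCommGroup F] [NormedSpace 𝕜 F]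

theorem HilbertBasis.hasSum_norm_inner_sq (e : HilbertBasis ι 𝕜 E) (x : E) :
    HasSum (fun i => ‖⟪e i, x⟫_𝕜‖ ^ 2) (‖x‖ ^ 2) := by
  simpa [e.repr_apply_apply] using lp.hasSum_norm (p := 2) (by norm_num) (e.repr x)

theorem HilbertBasis.opNorm_le_sqrt_tsum_norm_sq (e : HilbertBasis ι 𝕜 E) (T : E →L[𝕜] F)
    (hT : Summable fun i => ‖T (e i)‖ ^ 2) : ‖T‖ ≤ √(∑' i, ‖T (e i)‖ ^ 2) := by
  refine T.opNorm_le_bound (Real.sqrt_nonneg _) fun x => ?_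
  have hexp : HasSum (fun i => ⟪e i, x⟫_𝕜 • T (e i)) (T x) := by
    simpa [e.repr_apply_apply] using T.hasSum (e.hasSum_repr x)
  refine le_of_tendsto' hexp.norm fun s => ?_
  calc ‖∑ i ∈ s, ⟪e i, x⟫_𝕜 • T (e i)‖ ≤ ∑ i ∈ s, ‖⟪e i, x⟫_𝕜‖ * ‖T (e i)‖ :=
        (norm_sum_le _ _).trans_eq (by simp [norm_smul])
    _ ≤ √(∑ i ∈ s, ‖⟪e i, x⟫_𝕜‖ ^ 2) * √(∑ i ∈ s, ‖T (e i)‖ ^ 2) :=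
        Real.sum_mul_le_sqrt_mul_sqrt _ _ _
    _ ≤ √(‖x‖ ^ 2) * √(∑' i, ‖T (e i)‖ ^ 2) := by
        gcongr
        · exact e.orthonormal.sum_inner_products_le x
        · exact hT.sum_le_tsum s fun i _ => by positivity
    _ = √(∑' i, ‖T (e i)‖ ^ 2) * ‖x‖ := by rw [Real.sqrt_sq (norm_nonneg x), mul_comm]

end HilbertBasis

section Schmidt

variable {ι 𝕜 E F : Type*} [RCLike 𝕜] [NormedAddCommGroup E] [InnerProductSpace 𝕜 E]
  [NormedAddCommGroup F] [InnerProductSpace 𝕜 F]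

theorem rank_rankOne_le_one (x : F) (y : E) : (rankOne 𝕜 x y : E →ₗ[𝕜] F).rank ≤ 1 := by
  by_cases h : x = 0 ∨ y = 0
  · rw [rankOne_eq_zero.2 h, ContinuousLinearMap.toLinearMap_zero, LinearMap.rank_zero]
    exact zero_le_one
  · push Not at h
    exact (rank_rankOne h.1 h.2).le

theorem rank_sum_rankOne_le (J : Finset ι) (u : ι → F) (f : ι → E) :
    ((∑ j ∈ J, rankOne 𝕜 (u j) (f j) : E →L[𝕜] F) : E →ₗ[𝕜] F).rank ≤ J.card := by
  rw [ContinuousLinearMap.toLinearMap_sum]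
  refine (LinearMap.rank_finsetSum_le _ _).trans ?_
  simpa using Finset.sum_le_sum fun j (_ : j ∈ J) => rank_rankOne_le_one (u j) (f j)

variable [Fintype ι]

structure IsSchmidtDecomposition (S : E →L[𝕜] F) (f : ι → E) (u : ι → F) : Prop where
  orthonormal : Orthonormal 𝕜 f
  pairwise_inner_eq_zero : Pairwise fun i j => ⟪u i, u j⟫_𝕜 = 0
  eq_sum_rankOne : S = ∑ i, rankOne 𝕜 (u i) (f i)

namespace IsSchmidtDecomposition

variable {S : E →L[𝕜] F} {f : ι → E} {u : ι → F}

theorem apply_eq_sum (h : IsSchmidtDecomposition S f u) (x : E) :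
    S x = ∑ i, ⟪f i, x⟫_𝕜 • u i := by
  simp [h.eq_sum_rankOne]

theorem norm_apply_sq (h : IsSchmidtDecomposition S f u) (x : E) :
    ‖S x‖ ^ 2 = ∑ i, ‖⟪f i, x⟫_𝕜‖ ^ 2 * ‖u i‖ ^ 2 := by
  have hinner : ⟪S x, S x⟫_𝕜 = ∑ i, ((‖⟪f i, x⟫_𝕜‖ ^ 2 * ‖u i‖ ^ 2 : ℝ) : 𝕜) := by
    rw [h.apply_eq_sum, sum_inner]
    refine Finset.sum_congr rfl fun i _ => ?_
    rw [inner_sum, Finset.sum_eq_single i (fun j _ hji => by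
      rw [inner_smul_left, inner_smul_right, h.pairwise_inner_eq_zero hji.symm, mul_zero,
        mul_zero]) (by simp), inner_smul_left, inner_smul_right, inner_self_eq_norm_sq_to_K,
      ← mul_assoc, RCLike.conj_mul]
    norm_cast
  exact_mod_cast (inner_self_eq_norm_sq_to_K (S x)).symm.trans hinner

theorem opNorm_le (h : IsSchmidtDecomposition S f u) {B : ℝ} (hB : 0 ≤ B)
    (hu : ∀ i, ‖u i‖ ≤ B) : ‖S‖ ≤ B := by
  refine S.opNorm_le_bound hB fun x => le_of_sq_le_sq ?_ (by positivity)
  calc ‖S x‖ ^ 2 = ∑ i, ‖⟪f i, x⟫_𝕜‖ ^ 2 * ‖u i‖ ^ 2 := h.norm_apply_sq x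
    _ ≤ ∑ i, ‖⟪f i, x⟫_𝕜‖ ^ 2 * B ^ 2 := by gcongr; exact hu _
    _ ≤ ‖x‖ ^ 2 * B ^ 2 := by
        rw [← Finset.sum_mul]; gcongr; exact h.orthonormal.sum_inner_products_le x
    _ = (B * ‖x‖) ^ 2 := by ring

theorem sub_sum_rankOne (h : IsSchmidtDecomposition S f u) (J : Finset ι)
    [DecidablePred (· ∈ J)] :
    IsSchmidtDecomposition (S - ∑ j ∈ J, rankOne 𝕜 (u j) (f j)) f
      (fun j => if j ∈ J then 0 else u j) where
  orthonormal := h.orthonormal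
  pairwise_inner_eq_zero i j hij := by
    dsimp only
    split_ifs <;> simp [h.pairwise_inner_eq_zero hij]
  eq_sum_rankOne := by
    have hterm : ∀ i, rankOne 𝕜 (if i ∈ J then 0 else u i) (f i) =
        rankOne 𝕜 (u i) (f i) - if i ∈ J then rankOne 𝕜 (u i) (f i) else 0 := by
      intro i; split_ifs <;> simp
    rw [h.eq_sum_rankOne]
    simp only [hterm, Finset.sum_sub_distrib]
    simp

theorem comp_equiv {κ : Type*} [Fintype κ] (h : IsSchmidtDecomposition S f u) (σ : κ ≃ ι) :
    IsSchmidtDecomposition S (f ∘ σ) (u ∘ σ) where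
  orthonormal := h.orthonormal.comp σ σ.injective
  pairwise_inner_eq_zero i j hij := h.pairwise_inner_eq_zero (σ.injective.ne hij)
  eq_sum_rankOne := by rw [h.eq_sum_rankOne, ← σ.sum_comp]; rfl

theorem sum_norm_rpow_le_tsum_norm_rpow (h : IsSchmidtDecomposition S f u)
    {κ : Type*} (e : HilbertBasis κ 𝕜 E) {p : ℝ} (hp0 : 0 < p) (hp2 : p ≤ 2)
    (hS : Summable fun k => ‖S (e k)‖ ^ p) : ∑ i, ‖u i‖ ^ p ≤ ∑' k, ‖S (e k)‖ ^ p := by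
  let w : ι → κ → ℝ := fun i k => ‖⟪f i, e k⟫_𝕜‖ ^ 2
  have hsq_rpow : ∀ x : ℝ, 0 ≤ x → (x ^ 2) ^ (p / 2) = x ^ p := fun x hx => by
    rw [← Real.rpow_natCast, ← Real.rpow_mul hx, Nat.cast_ofNat, mul_div_cancel₀ p two_ne_zero]
  have hw : ∀ i, HasSum (w i) 1 := fun i => by
    simpa [w, norm_inner_symm, h.orthonormal.1 i] using e.hasSum_norm_inner_sq (f i)
  have hpoint : ∀ k, ∑ i, w i k * ‖u i‖ ^ p ≤ ‖S (e k)‖ ^ p := fun k => by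
    have hw1 : ∑ i, w i k ≤ 1 := by
      simpa [e.orthonormal.1 k] using h.orthonormal.sum_inner_products_le (e k)
    calc ∑ i, w i k * ‖u i‖ ^ p = ∑ i, w i k * (‖u i‖ ^ 2) ^ (p / 2) := by
          simp only [hsq_rpow _ (norm_nonneg _)]
      _ ≤ (∑ i, w i k * ‖u i‖ ^ 2) ^ (p / 2) :=
          sum_mul_rpow_le_rpow_sum_mul _ (fun i => sq_nonneg _) (fun i => sq_nonneg _) hw1
            (by positivity) (by linarith)
      _ = ‖S (e k)‖ ^ p := by rw [← h.norm_apply_sq, hsq_rpow _ (norm_nonneg _)]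
  have hsumm : ∀ i, Summable fun k => w i k * ‖u i‖ ^ p := fun i => (hw i).summable.mul_right _
  calc ∑ i, ‖u i‖ ^ p = ∑ i, ∑' k, w i k * ‖u i‖ ^ p := by
        simp only [tsum_mul_right, (hw _).tsum_eq, one_mul]
    _ = ∑' k, ∑ i, w i k * ‖u i‖ ^ p := (Summable.tsum_finsetSum fun i _ => hsumm i).symm
    _ ≤ ∑' k, ‖S (e k)‖ ^ p := Summable.tsum_le_tsum hpoint (summable_sum fun i _ => hsumm i) hS

end IsSchmidtDecomposition

end Schmidt

section SchmidtApprox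

variable {H : Type*} [NormedAddCommGroup H] [InnerProductSpace ℂ H] {n : ℕ} {S : H →L[ℂ] H}
  {f u : Fin n → H}

theorem IsSchmidtDecomposition.approxNumber_le (h : IsSchmidtDecomposition S f u)
    (hu : Antitone fun i => ‖u i‖) (i : Fin n) : approxNumber S i ≤ ‖u i‖ := by
  classical
  calc approxNumber S i ≤ ‖S - ∑ j ∈ Finset.Iio i, rankOne ℂ (u j) (f j)‖ :=
        approxNumber_le_norm_sub S
          ((rank_sum_rankOne_le _ u f).trans_eq (by rw [Fin.card_Iio]))
    _ ≤ ‖u i‖ := (h.sub_sum_rankOne _).opNorm_le (norm_nonneg _) fun j => by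
        by_cases hj : j < i
        · simp [hj]
        · simpa [hj] using hu (not_lt.1 hj)

theorem IsSchmidtDecomposition.sum_range_approxNumber_rpow_le
    (h : IsSchmidtDecomposition S f u) {p : ℝ} (hp : 0 < p) (M : ℕ) :
    ∑ m ∈ Finset.range M, approxNumber S m ^ p ≤ ∑ i, ‖u i‖ ^ p := by
  classical
  let σ := Tuple.sort fun i => OrderDual.toDual ‖u i‖
  have hσ : IsSchmidtDecomposition S (f ∘ σ) (u ∘ σ) := h.comp_equiv σ
  have hanti : Antitone fun i => ‖(u ∘ σ) i‖ :=
    monotone_toDual_comp_iff.1 (Tuple.monotone_sort fun i => OrderDual.toDual ‖u i‖)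
  have hrank : LinearMap.rank (S : H →ₗ[ℂ] H) ≤ n := by
    simpa [h.eq_sum_rankOne] using rank_sum_rankOne_le Finset.univ u f
  calc ∑ m ∈ Finset.range M, approxNumber S m ^ p
      = ∑ m ∈ Finset.range M with m < n, approxNumber S m ^ p := by
        refine (Finset.sum_filter_of_ne fun m _ hm => not_le.1 fun hnm => hm ?_).symm
        rw [approxNumber_eq_zero_of_rank_le (hrank.trans (by exact_mod_cast hnm)),
          Real.zero_rpow hp.ne']
    _ ≤ ∑ m ∈ Finset.range n, approxNumber S m ^ p :=
        Finset.sum_le_sum_of_subset_of_nonneg (fun m hm => by simp_all)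
          fun m _ _ => Real.rpow_nonneg (approxNumber_nonneg S m) p
    _ = ∑ i : Fin n, approxNumber S i ^ p := Finset.sum_range _
    _ ≤ ∑ i, ‖u (σ i)‖ ^ p := Finset.sum_le_sum fun i _ =>
        Real.rpow_le_rpow (approxNumber_nonneg S i) (hσ.approxNumber_le hanti i) hp.le
    _ = ∑ i, ‖u i‖ ^ p := Equiv.sum_comp σ fun i => ‖u i‖ ^ p

end SchmidtApprox

section Existence

variable {𝕜 E F : Type*} [RCLike 𝕜] [NormedAddCommGroup E] [InnerProductSpace 𝕜 E]
  [NormedAddCommGroup F] [InnerProductSpace 𝕜 F]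

theorem ContinuousLinearMap.exists_orthonormalBasis_pairwise_inner_apply_eq_zero
    [FiniteDimensional 𝕜 E] [CompleteSpace F] (B : E →L[𝕜] F) :
    ∃ b : OrthonormalBasis (Fin (Module.finrank 𝕜 E)) 𝕜 E,
      Pairwise fun i j => ⟪B (b i), B (b j)⟫_𝕜 = 0 := by
  have : CompleteSpace E := FiniteDimensional.complete 𝕜 E
  have hA := B.isPositive_adjoint_comp_self.isSymmetric
  refine ⟨hA.eigenvectorBasis rfl, fun i j hij => ?_⟩
  dsimp only
  rw [← ContinuousLinearMap.adjoint_inner_left, ← ContinuousLinearMap.comp_apply,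
    ← ContinuousLinearMap.coe_coe, hA.apply_eigenvectorBasis, inner_smul_left,
    (hA.eigenvectorBasis rfl).orthonormal.2 hij, mul_zero]

theorem isSchmidtDecomposition_comp_orthogonalProjectionOnto {ι : Type*} [Fintype ι]
    {K : Submodule 𝕜 E} [K.HasOrthogonalProjection] (B : K →L[𝕜] F)
    (b : OrthonormalBasis ι 𝕜 K)
    (hb : Pairwise fun i j => ⟪B (b i), B (b j)⟫_𝕜 = 0) :
    IsSchmidtDecomposition (B ∘L K.orthogonalProjectionOnto) (fun i => (b i : E))
      (fun i => B (b i)) where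
  orthonormal := b.orthonormal.comp_linearIsometry K.subtypeₗᵢ
  pairwise_inner_eq_zero := hb
  eq_sum_rankOne := by
    simp [b.orthogonalProjectionOnto_eq_sum_rankOne, ContinuousLinearMap.comp_finsetSum,
      comp_rankOne]

theorem exists_isSchmidtDecomposition_comp_starProjection (T : E →L[𝕜] F) (K : Submodule 𝕜 E)
    [FiniteDimensional 𝕜 K] [CompleteSpace F] :
    ∃ (f : Fin (Module.finrank 𝕜 K) → E) (u : Fin (Module.finrank 𝕜 K) → F),
      IsSchmidtDecomposition (T ∘L K.starProjection) f u := by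
  obtain ⟨b, hb⟩ := (T ∘L K.subtypeL).exists_orthonormalBasis_pairwise_inner_apply_eq_zero
  exact ⟨_, _, isSchmidtDecomposition_comp_orthogonalProjectionOnto _ b hb⟩

end Existence

instance FiniteDimensional.span_image_finset {ι 𝕜 E : Type*} [DivisionRing 𝕜] [AddCommGroup E]
    [Module 𝕜 E] (e : ι → E) (s : Finset ι) : FiniteDimensional 𝕜 (Submodule.span 𝕜 (e '' s)) :=
  FiniteDimensional.span_of_finite 𝕜 (s.finite_toSet.image e)

section Compression

variable {ι 𝕜 E F : Type*} [RCLike 𝕜] [NormedAddCommGroup E] [InnerProductSpace 𝕜 E]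
  [NormedAddCommGroup F] [NormedSpace 𝕜 F]

theorem starProjection_span_image_apply_of_mem {e : ι → E} {s : Set ι}
    [(Submodule.span 𝕜 (e '' s)).HasOrthogonalProjection] {k : ι} (hk : k ∈ s) :
    (Submodule.span 𝕜 (e '' s)).starProjection (e k) = e k :=
  Submodule.starProjection_eq_self_iff.2 (Submodule.subset_span (Set.mem_image_of_mem e hk))

theorem Orthonormal.starProjection_span_image_apply_of_notMem {e : ι → E} (he : Orthonormal 𝕜 e)
    {s : Set ι} [(Submodule.span 𝕜 (e '' s)).HasOrthogonalProjection] {k : ι} (hk : k ∉ s) :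
    (Submodule.span 𝕜 (e '' s)).starProjection (e k) = 0 := by
  refine (Submodule.starProjection_apply_eq_zero_iff _).2 ?_
  have hortho : Submodule.span 𝕜 (e '' s) ⟂ 𝕜 ∙ e k := Submodule.isOrtho_span.2 <| by
    rintro _ ⟨j, hj, rfl⟩ _ rfl
    exact he.2 (ne_of_mem_of_not_mem hj hk)
  exact hortho.symm (Submodule.mem_span_singleton_self _)

theorem norm_comp_starProjection_span_image_apply_le {e : ι → E} (he : Orthonormal 𝕜 e)
    (T : E →L[𝕜] F) (s : Finset ι) (k : ι) :
    ‖(T ∘L (Submodule.span 𝕜 (e '' s)).starProjection) (e k)‖ ≤ ‖T (e k)‖ := by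
  by_cases hk : k ∈ s
  · simp [starProjection_span_image_apply_of_mem (Finset.mem_coe.2 hk)]
  · simp [he.starProjection_span_image_apply_of_notMem (Finset.mem_coe.not.2 hk)]

theorem HilbertBasis.tendsto_comp_starProjection_span_image (e : HilbertBasis ι 𝕜 E)
    (T : E →L[𝕜] F) (hT : Summable fun k => ‖T (e k)‖ ^ 2) :
    Tendsto (fun s : Finset ι => T ∘L (Submodule.span 𝕜 (e '' s)).starProjection) atTop
      (𝓝 T) := by
  have hres : ∀ (s : Finset ι) k,
      ‖(T - T ∘L (Submodule.span 𝕜 (e '' s)).starProjection) (e k)‖ ^ 2 =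
        (s : Set ι)ᶜ.indicator (fun k => ‖T (e k)‖ ^ 2) k := fun s k => by
    by_cases hk : k ∈ s
    · simp [hk, starProjection_span_image_apply_of_mem (Finset.mem_coe.2 hk)]
    · simp [hk,
        e.orthonormal.starProjection_span_image_apply_of_notMem (Finset.mem_coe.not.2 hk)]
  rw [tendsto_iff_norm_sub_tendsto_zero]
  refine squeeze_zero (fun _ => norm_nonneg _) (fun s => ?_)
    (by simpa using (tendsto_tsum_compl_atTop_zero fun k => ‖T (e k)‖ ^ 2).sqrt)
  rw [norm_sub_rev]
  refine (e.opNorm_le_sqrt_tsum_norm_sq _ ?_).trans_eq ?_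
  · simpa only [hres] using hT.indicator _
  · simp only [hres, ← tsum_subtype]
    rfl

theorem isCompactOperator_comp_starProjection (T : E →L[𝕜] F) (K : Submodule 𝕜 E)
    [FiniteDimensional 𝕜 K] : IsCompactOperator (T ∘L K.starProjection) :=
  (isCompactOperator_of_locallyCompactSpace_dom K.orthogonalProjectionOnto).clm_comp
    (T ∘L K.subtypeL)

end Compression

theorem sum_range_approxNumber_comp_starProjection_rpow_le {ι H : Type*}
    [NormedAddCommGroup H] [InnerProductSpace ℂ H] [CompleteSpace H] (T : H →L[ℂ] H)
    (e : HilbertBasis ι ℂ H) (s : Finset ι) {p : ℝ} (hp0 : 0 < p) (hp2 : p ≤ 2) (hT : Summable fun k => ‖T (e k)‖ ^ p)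
    (M : ℕ) :
    ∑ m ∈ Finset.range M,
        approxNumber (T ∘L (Submodule.span ℂ (e '' s)).starProjection) m ^ p ≤
      ∑' k, ‖T (e k)‖ ^ p := by
  set S := T ∘L (Submodule.span ℂ (e '' s)).starProjection
  obtain ⟨f, u, h⟩ :=
    exists_isSchmidtDecomposition_comp_starProjection T (Submodule.span ℂ (e '' s))
  have hle : ∀ k, ‖S (e k)‖ ^ p ≤ ‖T (e k)‖ ^ p := fun k => by
    gcongr; exact norm_comp_starProjection_span_image_apply_le e.orthonormal T s k
  have hS : Summable fun k => ‖S (e k)‖ ^ p := hT.of_nonneg_of_le (fun _ => by positivity) hle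
  calc _ ≤ ∑ i, ‖u i‖ ^ p := h.sum_range_approxNumber_rpow_le hp0 M
    _ ≤ ∑' k, ‖S (e k)‖ ^ p := h.sum_norm_rpow_le_tsum_norm_rpow e hp0 hp2 hS
    _ ≤ ∑' k, ‖T (e k)‖ ^ p := hS.tsum_le_tsum hle hT

theorem memSchatten_of_tsum_norm_pow_general
    {H : Type*} [NormedAddCommGroup H] [InnerProductSpace ℂ H] [CompleteSpace H]
    (T : H →L[ℂ] H) (p : ℝ) (hp0 : 0 < p) (hp2 : p ≤ 2)
    (e : HilbertBasis ℕ ℂ H) (hsum : Summable (fun n : ℕ => ‖T (e n)‖ ^ p)) :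
    MemSchatten p T ∧ ∑' n : ℕ, approxNumber T n ^ p ≤ ∑' n : ℕ, ‖T (e n)‖ ^ p := by
  have hlim := e.tendsto_comp_starProjection_span_image T
    (summable_norm_sq_of_summable_norm_rpow hp0 hp2 hsum)
  have hpartial : ∀ M, ∑ m ∈ Finset.range M, approxNumber T m ^ p ≤ ∑' n, ‖T (e n)‖ ^ p :=
    fun M => (isClosed_setOf_sum_range_approxNumber_rpow_le hp0.le M _).mem_of_tendsto hlim
      (.of_forall fun s =>
        sum_range_approxNumber_comp_starProjection_rpow_le T e s hp0 hp2 hsum M)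
  have hsummable : Summable fun n => approxNumber T n ^ p :=
    summable_of_sum_range_le (fun n => Real.rpow_nonneg (approxNumber_nonneg T n) p) hpartial
  have hcompact : IsCompactOperator T := isCompactOperator_of_tendsto hlim
    (.of_forall fun _ => isCompactOperator_comp_starProjection T _)
  exact ⟨⟨hcompact, hsummable⟩, hsummable.tsum_le_of_sum_range_le hpartial⟩

theorem memSchatten_of_tsum_norm_pow
    {H : Type*} [NormedAddCommGroup H] [InnerProductSpace ℂ H] [CompleteSpace H]
    [TopologicalSpace.SeparableSpace H]
    (T : H →L[ℂ] H) (p : ℝ) (hp0 : 0 < p) (hp2 : p ≤ 2)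
    (e : HilbertBasis ℕ ℂ H) (hsum : Summable (fun n : ℕ => ‖T (e n)‖ ^ p)) :
    MemSchatten p T ∧ ∑' n : ℕ, approxNumber T n ^ p ≤ ∑' n : ℕ, ‖T (e n)‖ ^ p :=
  memSchatten_of_tsum_norm_pow_general T p hp0 hp2 e hsum
end

section
/- Suppose G is the Gram matrix of an interpolating sequence {α_j} (a bounded invertible operator on ℓ²), D the diagonal operator with entries 1/B_j(α_j), and G^{-1} = D* Gᵗ D. If G - I is compact, then D*D - I is compact, and hence |B_j(α_j)| → 1, i.e., the sequence is thin. -/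
/-!
By Bessel's inequality the functionals `⟪e j, ·⟫` of an orthonormal sequence tend to `0`
pointwise, hence uniformly on compact sets; a compact operator `T` maps the `e j` into a compact
set, so its diagonal entries `⟪e j, T e j⟫` tend to `0`. Applied to `G - 1` and to
`G⁻¹ - 1 = -G⁻¹ (G - 1)`, this makes the diagonals of `G` and `G⁻¹` tend to `1`. The formula
`G⁻¹ = D* Gᵗ D` gives `(G⁻¹)ⱼⱼ = |1 / B j|² Gⱼⱼ`, so `|1 / B j|² → 1`. Finally `D* D - 1` is the
diagonal operator with entries `|1 / B j|² - 1 → 0`, the norm limit of its finite-rank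
truncations, hence compact.
-/

open Filter Topology
open scoped ENNReal lp ComplexConjugate

theorem tendsto_apply_apply_of_isCompact {𝕜 E F : Type*} [NontriviallyNormedField 𝕜]
    [NormedAddCommGroup E] [NormedSpace 𝕜 E] [NormedAddCommGroup F] [NormedSpace 𝕜 F]
    {f : ℕ → E →L[𝕜] F} {C : ℝ} (hf : ∀ j, ‖f j‖ ≤ C)
    (hf₀ : ∀ x, Tendsto (fun j => f j x) atTop (𝓝 0)) {K : Set E} (hK : IsCompact K)
    {x : ℕ → E} (hx : ∀ j, x j ∈ K) : Tendsto (fun j => f j (x j)) atTop (𝓝 0) := by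
  refine tendsto_of_subseq_tendsto fun ns hns => ?_
  obtain ⟨a, -, φ, hφ_mono, hφ⟩ := hK.tendsto_subseq fun n => hx (ns n)
  refine ⟨φ, ?_⟩
  have hnear : Tendsto (fun n => f (ns (φ n)) (x (ns (φ n)) - a)) atTop (𝓝 0) := by
    refine squeeze_zero_norm (fun n => ((f _).le_opNorm _).trans
      (mul_le_mul_of_nonneg_right (hf _) (norm_nonneg _))) ?_
    simpa using (tendsto_sub_nhds_zero_iff.2 hφ).norm.const_mul C
  have hfar : Tendsto (fun n => f (ns (φ n)) a) atTop (𝓝 0) :=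
    (hf₀ a).comp (hns.comp hφ_mono.tendsto_atTop)
  simpa using hnear.add hfar

theorem isCompactOperator_sub_one_of_comp_eq_one {𝕜 E : Type*} [NontriviallyNormedField 𝕜]
    [NormedAddCommGroup E] [NormedSpace 𝕜 E] {S T : E →L[𝕜] E} (hST : S.comp T = 1)
    (hT : IsCompactOperator (T - 1 : E →L[𝕜] E)) : IsCompactOperator (S - 1 : E →L[𝕜] E) := by
  have : S - 1 = -S.comp (T - 1) := by
    rw [← ContinuousLinearMap.mul_def, mul_sub, ContinuousLinearMap.mul_def, hST, mul_one, neg_sub]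
  rw [this]
  exact (hT.clm_comp S).neg

section InnerProductSpace

variable {𝕜 E : Type*} [RCLike 𝕜] [NormedAddCommGroup E] [InnerProductSpace 𝕜 E]
  {e : ℕ → E}

theorem Orthonormal.tendsto_inner_zero (he : Orthonormal 𝕜 e) (x : E) :
    Tendsto (fun j => inner 𝕜 (e j) x) atTop (𝓝 0) := by
  have hsq := (he.inner_products_summable x).tendsto_atTop_zero
  rw [tendsto_zero_iff_norm_tendsto_zero]
  simpa [Real.sqrt_sq (norm_nonneg _)] using hsq.sqrt

theorem IsCompactOperator.tendsto_inner_apply_orthonormal {T : E →L[𝕜] E}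
    (hT : IsCompactOperator T) (he : Orthonormal 𝕜 e) :
    Tendsto (fun j => inner 𝕜 (e j) (T (e j))) atTop (𝓝 0) :=
  tendsto_apply_apply_of_isCompact (f := fun j => innerSL 𝕜 (e j)) (C := 1)
    (fun j => by simp [he.1 j]) he.tendsto_inner_zero
    (hT.isCompact_closure_image_closedBall 1)
    (fun j => subset_closure ⟨e j, by simp [he.1 j], rfl⟩)

theorem Orthonormal.tendsto_inner_apply_of_isCompactOperator_sub_one (he : Orthonormal 𝕜 e)
    {T : E →L[𝕜] E} (hT : IsCompactOperator (T - 1 : E →L[𝕜] E)) :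
    Tendsto (fun j => inner 𝕜 (e j) (T (e j))) atTop (𝓝 1) := by
  have := (hT.tendsto_inner_apply_orthonormal he).add_const 1
  simpa [inner_sub_right, he.1, inner_self_eq_norm_sq_to_K] using this

end InnerProductSpace

namespace lp

variable {𝕜 ι : Type*} [RCLike 𝕜]

@[simp]
theorem evalCLM_apply {p : ℝ≥0∞} [Fact (1 ≤ p)] (i : ι) (x : lp (fun _ : ι => 𝕜) p) :
    lp.evalCLM 𝕜 (fun _ : ι => 𝕜) p i x = x i :=
  rfl

section Diagonal

variable [DecidableEq ι]

theorem inner_single_one_left (i : ι) (x : ℓ²(ι, 𝕜)) :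
    inner 𝕜 (lp.single 2 i (1 : 𝕜)) x = x i := by
  simp [lp.inner_single_left]

theorem orthonormal_single : Orthonormal 𝕜 fun i : ι => lp.single 2 i (1 : 𝕜) := by
  rw [orthonormal_iff_ite]
  intro i j
  rw [inner_single_one_left, lp.single_apply, Pi.single_apply]

theorem apply_eq_mul_of_map_single {p : ℝ≥0∞} [Fact (1 ≤ p)] (hp : p ≠ ⊤)
    {D : lp (fun _ : ι => 𝕜) p →L[𝕜] lp (fun _ : ι => 𝕜) p} {b : ι → 𝕜}
    (hD : ∀ i, D (lp.single p i 1) = b i • lp.single p i 1) (x : lp (fun _ : ι => 𝕜) p)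
    (j : ι) : D x j = b j * x j := by
  have : (lp.evalCLM 𝕜 _ p j).comp D = b j • lp.evalCLM 𝕜 (fun _ : ι => 𝕜) p j := by
    refine lp.ext_continuousLinearMap hp fun i => ContinuousLinearMap.ext_ring ?_
    simp only [ContinuousLinearMap.comp_apply, singleContinuousLinearMap_apply, hD, map_smul,
      evalCLM_apply, lp.single_apply, Pi.single_apply, smul_eq_mul, mul_ite, mul_one, mul_zero,
      ContinuousLinearMap.smul_comp, smul_apply]
    split_ifs with hji <;> simp [hji]
  exact congr($this x)

theorem adjoint_apply_eq_conj_mul_of_map_single {D : ℓ²(ι, 𝕜) →L[𝕜] ℓ²(ι, 𝕜)} {b : ι → 𝕜}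
    (hD : ∀ i, D (lp.single 2 i 1) = b i • lp.single 2 i 1) (x : ℓ²(ι, 𝕜)) (j : ι) :
    D.adjoint x j = conj (b j) * x j := by
  rw [← inner_single_one_left, ContinuousLinearMap.adjoint_inner_right, hD, inner_smul_left,
    inner_single_one_left]

end Diagonal

section Truncation

variable {p : ℝ≥0∞} [Fact (1 ≤ p)]

variable (𝕜 p) in
noncomputable def truncation (n : ℕ) : lp (fun _ : ℕ => 𝕜) p →L[𝕜] lp (fun _ : ℕ => 𝕜) p :=
  ∑ i ∈ Finset.range n,
    (ContinuousLinearMap.toSpanSingleton 𝕜 (lp.single p i 1)).comp (lp.evalCLM 𝕜 _ p i)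

theorem truncation_apply (n : ℕ) (x : lp (fun _ : ℕ => 𝕜) p) (j : ℕ) :
    truncation 𝕜 p n x j = if j < n then x j else 0 := by
  rw [truncation, sum_apply, lp.coeFn_sum, Finset.sum_apply]
  simp [lp.single_apply, Pi.single_apply]

theorem isCompactOperator_truncation (n : ℕ) : IsCompactOperator (truncation 𝕜 p n) := by
  refine Finset.sum_induction _
    (fun T : lp (fun _ : ℕ => 𝕜) p →L[𝕜] lp (fun _ : ℕ => 𝕜) p => IsCompactOperator T)
    (fun S T hS hT => by simpa using hS.add hT) (by simpa using isCompactOperator_zero)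
    fun i _ => ?_
  exact (isCompactOperator_of_locallyCompactSpace_dom
    (lp.evalCLM 𝕜 (fun _ : ℕ => 𝕜) p i)).clm_comp (ContinuousLinearMap.toSpanSingleton 𝕜 (lp.single (E := fun _ : ℕ => 𝕜) p i 1))

theorem isCompactOperator_of_apply_eq_mul
    {T : lp (fun _ : ℕ => 𝕜) p →L[𝕜] lp (fun _ : ℕ => 𝕜) p} {c : ℕ → 𝕜} (hT : ∀ x j, T x j = c j * x j) (hc : Tendsto c atTop (𝓝 0)) :
    IsCompactOperator T := by
  refine isCompactOperator_of_tendsto (l := atTop) (F := fun n => (truncation 𝕜 p n).comp T) ?_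
    (.of_forall fun n => (isCompactOperator_truncation n).comp_clm T)
  rw [Metric.tendsto_atTop]
  intro ε hε
  obtain ⟨N, hN⟩ := Metric.tendsto_atTop.1 hc (ε / 2) (half_pos hε)
  refine ⟨N, fun n hn => ?_⟩
  have hε₂ : ‖((ε / 2 : ℝ) : 𝕜)‖ = ε / 2 := by
    rw [RCLike.norm_ofReal, abs_of_pos (half_pos hε)]
  rw [dist_eq_norm]
  refine lt_of_le_of_lt (ContinuousLinearMap.opNorm_le_bound _ (half_pos hε).le fun x => ?_)
    (half_lt_self hε)
  calc ‖((truncation 𝕜 p n).comp T - T) x‖ ≤ ‖((ε / 2 : ℝ) : 𝕜) • x‖ := by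
        refine lp.norm_mono (zero_lt_one.trans_le Fact.out).ne' fun j => ?_
        simp only [sub_apply, ContinuousLinearMap.comp_apply, lp.coeFn_sub, Pi.sub_apply,
          truncation_apply, lp.coeFn_smul, Pi.smul_apply, norm_smul, hε₂]
        by_cases hj : j < n
        · simp only [if_pos hj, sub_self, _root_.norm_zero]
          positivity
        · have hcj : ‖c j‖ < ε / 2 := by simpa using hN j (hn.trans (not_lt.1 hj))
          simp only [if_neg hj, hT, zero_sub, _root_.norm_neg, norm_mul]
          gcongr
    _ = ε / 2 * ‖x‖ := by rw [norm_smul, hε₂]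

end Truncation

end lp

theorem thin_of_gram_sub_id_compact_general
    (G Ginv Gt D : ellTwo →L[ℂ] ellTwo)
    (B : ℕ → ℂ)
    (hD : ∀ j, D (lp.single 2 j (1:ℂ)) = (1 / B j) • lp.single 2 j (1:ℂ))
    (hGt : ∀ i j : ℕ,
      (inner ℂ (lp.single 2 i (1:ℂ)) (Gt (lp.single 2 j (1:ℂ))) : ℂ) =
      (inner ℂ (lp.single 2 j (1:ℂ)) (G (lp.single 2 i (1:ℂ))) : ℂ))
    (hinv₁ : Ginv.comp G = 1)
    (hformula : Ginv = (ContinuousLinearMap.adjoint D).comp (Gt.comp D))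
    (hcompact : IsCompactOperator ((G - 1 : ellTwo →L[ℂ] ellTwo) : ellTwo → ellTwo)) :
    IsCompactOperator (((ContinuousLinearMap.adjoint D).comp D - 1 : ellTwo →L[ℂ] ellTwo) : ellTwo → ellTwo) ∧
      Filter.Tendsto (fun j => ‖B j‖) Filter.atTop (nhds 1) := by
  have he : Orthonormal ℂ fun j : ℕ => (lp.single 2 j (1 : ℂ) : ellTwo) := lp.orthonormal_single
  have hGdiag := he.tendsto_inner_apply_of_isCompactOperator_sub_one (T := G) hcompact
  have hGinvdiag := he.tendsto_inner_apply_of_isCompactOperator_sub_one (T := Ginv)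
    (isCompactOperator_sub_one_of_comp_eq_one hinv₁ hcompact)
  have hdiag : ∀ j, inner ℂ (lp.single 2 j (1 : ℂ)) (Ginv (lp.single 2 j 1)) =
      (‖1 / B j‖ : ℂ) ^ 2 * inner ℂ (lp.single 2 j (1 : ℂ)) (G (lp.single 2 j 1)) := by
    intro j
    rw [hformula, ContinuousLinearMap.comp_apply, ContinuousLinearMap.adjoint_inner_right,
      ContinuousLinearMap.comp_apply, hD, inner_smul_left, map_smul, inner_smul_right, hGt,
      ← mul_assoc, Complex.conj_mul']
  have hsq : Tendsto (fun j => (‖1 / B j‖ : ℂ) ^ 2) atTop (𝓝 1) := by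
    have hratio := hGinvdiag.div hGdiag one_ne_zero
    rw [div_one] at hratio
    refine hratio.congr' ?_
    filter_upwards [hGdiag.eventually_ne one_ne_zero] with j hj
    rw [Pi.div_apply, hdiag, mul_div_cancel_right₀ _ hj]
  have hnorm : Tendsto (fun j => ‖1 / B j‖) atTop (𝓝 1) := by
    simpa [Real.sqrt_sq] using hsq.norm.sqrt
  refine ⟨lp.isCompactOperator_of_apply_eq_mul (c := fun j => (‖1 / B j‖ : ℂ) ^ 2 - 1)
    (fun x j => ?_) (by simpa using hsq.sub_const 1), by simpa using hnorm.inv₀ one_ne_zero⟩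
  rw [sub_apply, lp.coeFn_sub, Pi.sub_apply, ContinuousLinearMap.comp_apply,
    lp.adjoint_apply_eq_conj_mul_of_map_single hD, lp.apply_eq_mul_of_map_single (by simp) hD,
    one_apply_eq_self, ← mul_assoc, Complex.conj_mul']
  ring

theorem thin_of_gram_sub_id_compact
    (G Ginv Gt D : ellTwo →L[ℂ] ellTwo)
    (B : ℕ → ℂ) (δ : ℝ) (hδ : 0 < δ) (hB : ∀ j, δ ≤ ‖B j‖)
    (hBle : ∀ j, ‖B j‖ ≤ 1)
    (hD : ∀ j, D (lp.single 2 j (1:ℂ)) = (1 / B j) • lp.single 2 j (1:ℂ))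
    (hGt : ∀ i j : ℕ,
      (inner ℂ (lp.single 2 i (1:ℂ)) (Gt (lp.single 2 j (1:ℂ))) : ℂ) =
      (inner ℂ (lp.single 2 j (1:ℂ)) (G (lp.single 2 i (1:ℂ))) : ℂ))
    (hinv₁ : Ginv.comp G = 1) (hinv₂ : G.comp Ginv = 1)
    (hformula : Ginv = (ContinuousLinearMap.adjoint D).comp (Gt.comp D))
    (hcompact : IsCompactOperator ((G - 1 : ellTwo →L[ℂ] ellTwo) : ellTwo → ellTwo)) :
    IsCompactOperator (((ContinuousLinearMap.adjoint D).comp D - 1 : ellTwo →L[ℂ] ellTwo) : ellTwo → ellTwo) ∧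
      Filter.Tendsto (fun j => ‖B j‖) Filter.atTop (nhds 1) :=
  thin_of_gram_sub_id_compact_general G Ginv Gt D B hD hGt hinv₁ hformula hcompact
end
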